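/- For two qubits, the common kernel of the two operators |↓⟩⟨↓|_1 ⊗ (1 − |ι⟩⟨ι|)_2 and (1 − |ι⟩⟨ι|)_1 ⊗ |↓⟩⟨↓|_2 acting on (C² ⊗ C²)^{⊗2} (each factor a rung of two qubits), where |ι⟩ = (|↑↑⟩ + |↓↓⟩)/√2 and |↓⟩⟨↓| acts on one leg only, together with the rung-alignment constraint, intersected over all adjacent pairs of an L-site chain, is exactly 2-dimensional: it is spanned by |↑̃⟩^{⊗L} and |→̃⟩^{⊗L}, where |↑̃⟩ = |↑↑⟩ and |→̃⟩ = (|↑↑⟩+|↓↓⟩)/√2 are composite rung states. -/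

import Mathlib

open Matrix

namespace IsolatedQMBS

noncomputable section

/-- A rung of the ladder: a pair of qubit states (top leg, bottom leg). -/
abbrev Rung := Fin 2 × Fin 2

/-- Ladder configurations of length `L`. -/
abbrev Conf (L : ℕ) := Fin L → Rung

/-- The composite rung state `|↓̃⟩ = |↓⟩_t|↓⟩_b`. -/
def dnT : Rung → ℂ := fun r => if r = (1, 1) then 1 else 0

/-- The composite rung state `|←̃⟩ = (|↑̃⟩ − |↓̃⟩)/√2`. -/
def ltT : Rung → ℂ := fun r =>
  if r = (0, 0) then ((Real.sqrt 2)⁻¹ : ℂ)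
  else if r = (1, 1) then -((Real.sqrt 2)⁻¹ : ℂ) else 0

/-- The projector `|u, w⟩⟨u, w|` onto the product rung state `u ⊗ w` at rungs
`(j, j+1)`, acting as the identity elsewhere. -/
def pairProj {L : ℕ} [NeZero L] (j : Fin L) (u w : Rung → ℂ) :
    Matrix (Conf L) (Conf L) ℂ :=
  Matrix.of fun p q =>
    if ∀ i, i ≠ j → i ≠ j + 1 → p i = q i then
      (u (p j) * w (p (j + 1))) * star (u (q j) * w (q (j + 1))) else 0

/-- The all-up product state `|↑̃⟩^{⊗L}`, `|↑̃⟩ = |↑↑⟩`. -/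
def vUp (L : ℕ) : Conf L → ℂ := fun s => if ∀ j, s j = (0, 0) then 1 else 0

/-- The product state `|→̃⟩^{⊗L}` with `|→̃⟩ = (|↑↑⟩ + |↓↓⟩)/√2`. -/
def vRt (L : ℕ) : Conf L → ℂ := fun s =>
  if ∀ j, (s j).1 = (s j).2 then ((Real.sqrt 2)⁻¹ : ℂ) ^ L else 0


/-!
Each constraint `|u, w⟩⟨u, w|_{j,j+1} ψ = 0` says that, with all other rungs frozen, the overlap
of `ψ` with `u ⊗ w` on rungs `j, j + 1` vanishes. On aligned configurations (every rung `↑̃` or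
`↓̃`) the `|↓̃,←̃⟩` constraint reads `ψ(… ↓̃ ↑̃ …) = ψ(… ↓̃ ↓̃ …)`: a `↓̃` rung may spread to its
right neighbour without changing `ψ`. Since addition in `Fin L` wraps around, spreading once
around the chain shows that `ψ` takes one value on all aligned configurations except the all-`↑̃`
one, so `ψ` is a combination of `|↑̃⟩^{⊗L}` and `|→̃⟩^{⊗L}`. Conversely both product states satisfy
all constraints, and they are independent, as their values at all-`↑̃` and all-`↓̃` show.
-/

open Function

section SetPair

variable {α : Type*} {L : ℕ} [NeZero L]

def setPair (p : Fin L → α) (j : Fin L) (a b : α) : Fin L → α :=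
  update (update p j a) (j + 1) b

variable {j : Fin L} {p : Fin L → α} {a b : α}

lemma setPair_apply_left (hj : j + 1 ≠ j) : setPair p j a b j = a := by
  rw [setPair, update_of_ne hj.symm, update_self]

lemma setPair_apply_right : setPair p j a b (j + 1) = b :=
  update_self ..

lemma setPair_apply_of_ne {i : Fin L} (hi : i ≠ j) (hi' : i ≠ j + 1) :
    setPair p j a b i = p i := by
  rw [setPair, update_of_ne hi', update_of_ne hi]

lemma setPair_setPair (hj : j + 1 ≠ j) (a' b' : α) :
    setPair (setPair p j a b) j a' b' = setPair p j a' b' := by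
  rw [setPair, setPair, update_comm hj.symm, update_idem, update_comm hj, update_idem, setPair]

end SetPair

open Fin.NatCast in
theorem apply_eq_apply_const_of_propagate {α β : Type*} {L : ℕ} [NeZero L] (P : α → Prop)
    {d : α} (hd : P d) (f : (Fin L → α) → β)
    (hstep : ∀ s j, (∀ i, P (s i)) → s j = d → f (update s (j + 1) d) = f s)
    {s : Fin L → α} (hs : ∀ i, P (s i)) {j₀ : Fin L} (h₀ : s j₀ = d) :
    f s = f (fun _ => d) := by
  have filled : ∀ k : ℕ, ∃ s' : Fin L → α,
      (∀ i, P (s' i)) ∧ (∀ t ≤ k, s' (j₀ + t) = d) ∧ f s' = f s := by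
    intro k
    induction k with
    | zero => exact ⟨s, hs, fun t ht => by simpa [Nat.le_zero.mp ht] using h₀, rfl⟩
    | succ k ih =>
      obtain ⟨s', hs', hd', hf'⟩ := ih
      have hnext : j₀ + (k : Fin L) + 1 = j₀ + ((k + 1 : ℕ) : Fin L) := by
        rw [Nat.cast_succ, add_assoc]
      refine ⟨update s' (j₀ + (k + 1 : ℕ)) d, fun i => ?_, fun t ht => ?_, ?_⟩
      · rw [update_apply]
        split_ifs
        exacts [hd, hs' i]
      · rw [update_apply]
        split_ifs
        · rfl
        · exact hd' t (Nat.le_of_lt_succ (lt_of_le_of_ne ht (by rintro rfl; simp_all)))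
      · rw [← hnext, hstep s' _ hs' (hd' k le_rfl), hf']
  obtain ⟨s', -, hd', hf'⟩ := filled (L - 1)
  rw [← hf']
  congr 1
  funext i
  simpa using hd' (i - j₀).val (by have := (i - j₀).isLt; omega)

lemma rung_eq_of_aligned : ∀ {r : Rung}, r.1 = r.2 → r = (0, 0) ∨ r = (1, 1) := by decide

section ProductStates

variable {L : ℕ} {s : Conf L} {j : Fin L}

lemma vUp_eq_zero_of_ne (h : s j ≠ (0, 0)) : vUp L s = 0 :=
  if_neg fun hs => h (hs j)

lemma vUp_eq_zero_of_misaligned (h : (s j).1 ≠ (s j).2) : vUp L s = 0 :=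
  vUp_eq_zero_of_ne fun hs => h (by rw [hs])

lemma vRt_eq_zero_of_misaligned (h : (s j).1 ≠ (s j).2) : vRt L s = 0 :=
  if_neg fun hs => h (hs j)

lemma vRt_of_aligned (h : ∀ j, (s j).1 = (s j).2) : vRt L s = ((Real.sqrt 2)⁻¹ : ℂ) ^ L :=
  if_pos h

end ProductStates

variable {L : ℕ} [NeZero L] {j : Fin L}

lemma linearIndependent_vUp_vRt : LinearIndependent ℂ ![vUp L, vRt L] := by
  rw [LinearIndependent.pair_iff]
  intro a b hab
  have hb : b = 0 := by simpa [vUp, vRt_of_aligned] using congrFun hab (fun _ => (1, 1))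
  exact ⟨by simpa [hb, vUp] using congrFun hab (fun _ => (0, 0)), hb⟩

lemma pairProj_mulVec_apply (hj : j + 1 ≠ j) (u w : Rung → ℂ) (ψ : Conf L → ℂ) (p : Conf L) :
    (pairProj j u w *ᵥ ψ) p = u (p j) * w (p (j + 1)) *
      ∑ ab : Rung × Rung, star (u ab.1 * w ab.2) * ψ (setPair p j ab.1 ab.2) := by
  classical
  simp only [mulVec, dotProduct, pairProj, of_apply, ite_mul, zero_mul, Finset.mul_sum]
  rw [← Finset.sum_filter]
  symm
  refine Finset.sum_nbij' (fun ab => setPair p j ab.1 ab.2) (fun q => (q j, q (j + 1)))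
    (fun ab _ => ?_) (fun _ _ => Finset.mem_univ _) (fun ab _ => ?_) (fun q hq => ?_)
    (fun ab _ => ?_)
  · simpa using fun i hi hi' => (setPair_apply_of_ne hi hi').symm
  · simp [setPair_apply_left hj, setPair_apply_right]
  · funext i
    by_cases hi : i = j
    · subst hi
      exact setPair_apply_left hj
    by_cases hi' : i = j + 1
    · subst hi'
      exact setPair_apply_right
    · rw [setPair_apply_of_ne hi hi']
      exact (Finset.mem_filter.mp hq).2 i hi hi'
  · simp only [setPair_apply_left hj, setPair_apply_right]
    ring

lemma pairProj_mulVec_eq_zero_iff (hj : j + 1 ≠ j) {u w : Rung → ℂ} (hu : u ≠ 0) (hw : w ≠ 0)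
    (ψ : Conf L → ℂ) : pairProj j u w *ᵥ ψ = 0 ↔
      ∀ p : Conf L, ∑ ab : Rung × Rung, star (u ab.1 * w ab.2) * ψ (setPair p j ab.1 ab.2) = 0 := by
  refine ⟨fun h p => ?_, fun h => funext fun p => ?_⟩
  · obtain ⟨a, ha⟩ := Function.ne_iff.mp hu
    obtain ⟨b, hb⟩ := Function.ne_iff.mp hw
    have h' := congrFun h (setPair p j a b)
    rw [pairProj_mulVec_apply hj, setPair_apply_left hj, setPair_apply_right] at h'
    simp only [setPair_setPair hj, Pi.zero_apply] at h' ha hb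
    exact (mul_eq_zero.mp h').resolve_left (mul_ne_zero ha hb)
  · rw [pairProj_mulVec_apply hj, h, mul_zero, Pi.zero_apply]

lemma dnT_ne_zero : dnT ≠ 0 :=
  Function.ne_iff.mpr ⟨(1, 1), by simp [dnT]⟩

lemma ltT_ne_zero : ltT ≠ 0 :=
  Function.ne_iff.mpr ⟨(0, 0), by simp [ltT]⟩

lemma pairProj_dnT_ltT_mulVec_eq_zero_iff (hj : j + 1 ≠ j) (ψ : Conf L → ℂ) :
    pairProj j dnT ltT *ᵥ ψ = 0 ↔
      ∀ p, ψ (setPair p j (1, 1) (0, 0)) = ψ (setPair p j (1, 1) (1, 1)) := by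
  rw [pairProj_mulVec_eq_zero_iff hj dnT_ne_zero ltT_ne_zero]
  refine forall_congr' fun p => ?_
  simp [Fintype.sum_prod_type, dnT, ltT, ← mul_neg, ← mul_add, add_neg_eq_zero]

lemma pairProj_ltT_dnT_mulVec_eq_zero_iff (hj : j + 1 ≠ j) (ψ : Conf L → ℂ) :
    pairProj j ltT dnT *ᵥ ψ = 0 ↔
      ∀ p, ψ (setPair p j (0, 0) (1, 1)) = ψ (setPair p j (1, 1) (1, 1)) := by
  rw [pairProj_mulVec_eq_zero_iff hj ltT_ne_zero dnT_ne_zero]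
  refine forall_congr' fun p => ?_
  simp [Fintype.sum_prod_type, dnT, ltT, ← mul_neg, ← mul_add, add_neg_eq_zero]

lemma vRt_setPair {a b a' b' : Rung} (ha : a.1 = a.2) (hb : b.1 = b.2) (ha' : a'.1 = a'.2)
    (hb' : b'.1 = b'.2) (p : Conf L) : vRt L (setPair p j a b) = vRt L (setPair p j a' b') := by
  have h : ∀ i, (setPair p j a b i).1 = (setPair p j a b i).2 ↔
      (setPair p j a' b' i).1 = (setPair p j a' b' i).2 := by
    intro i
    simp only [setPair, update_apply]
    split_ifs <;> simp [ha, hb, ha', hb']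
  simp only [vRt, h]

lemma pairProj_dnT_ltT_mulVec_vUp (hj : j + 1 ≠ j) : pairProj j dnT ltT *ᵥ vUp L = 0 :=
  (pairProj_dnT_ltT_mulVec_eq_zero_iff hj _).mpr fun p => by
    rw [vUp_eq_zero_of_ne (j := j), vUp_eq_zero_of_ne (j := j)] <;>
      simp [setPair_apply_left hj]

lemma pairProj_ltT_dnT_mulVec_vUp (hj : j + 1 ≠ j) : pairProj j ltT dnT *ᵥ vUp L = 0 :=
  (pairProj_ltT_dnT_mulVec_eq_zero_iff hj _).mpr fun p => by
    rw [vUp_eq_zero_of_ne (j := j + 1), vUp_eq_zero_of_ne (j := j + 1)] <;>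
      simp [setPair_apply_right]

lemma pairProj_dnT_ltT_mulVec_vRt (hj : j + 1 ≠ j) : pairProj j dnT ltT *ᵥ vRt L = 0 :=
  (pairProj_dnT_ltT_mulVec_eq_zero_iff hj _).mpr (vRt_setPair rfl rfl rfl rfl)

lemma pairProj_ltT_dnT_mulVec_vRt (hj : j + 1 ≠ j) : pairProj j ltT dnT *ᵥ vRt L = 0 :=
  (pairProj_ltT_dnT_mulVec_eq_zero_iff hj _).mpr (vRt_setPair rfl rfl rfl rfl)

lemma apply_eq_apply_const_down (hj : ∀ j : Fin L, j + 1 ≠ j) {ψ : Conf L → ℂ}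
    (hψ : ∀ j, pairProj j dnT ltT *ᵥ ψ = 0) {s : Conf L} (hs : ∀ i, (s i).1 = (s i).2)
    {j₀ : Fin L} (h₀ : s j₀ = (1, 1)) : ψ s = ψ (fun _ => (1, 1)) := by
  refine apply_eq_apply_const_of_propagate (fun r : Rung => r.1 = r.2) rfl ψ
    (fun t j ht htj => ?_) hs h₀
  rcases rung_eq_of_aligned (ht (j + 1)) with hup | hdown
  · have h := (pairProj_dnT_ltT_mulVec_eq_zero_iff (hj j) ψ).mp (hψ j) t
    rw [setPair, setPair, ← htj, update_eq_self, ← hup, update_eq_self] at h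
    rw [← htj, h]
  · rw [← hdown, update_eq_self]

lemma eq_smul_vUp_add_smul_vRt (hj : ∀ j : Fin L, j + 1 ≠ j) {ψ : Conf L → ℂ}
    (hal : ∀ s, (∃ j, (s j).1 ≠ (s j).2) → ψ s = 0) (hψ : ∀ j, pairProj j dnT ltT *ᵥ ψ = 0) :
    ψ = (ψ (fun _ => (0, 0)) - ψ (fun _ => (1, 1))) • vUp L +
      (ψ (fun _ => (1, 1)) / ((Real.sqrt 2)⁻¹ : ℂ) ^ L) • vRt L := by
  have hc : ((Real.sqrt 2)⁻¹ : ℂ) ^ L ≠ 0 := by simp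
  funext s
  simp only [Pi.add_apply, Pi.smul_apply, smul_eq_mul]
  by_cases hs : ∀ j, (s j).1 = (s j).2
  · rw [vRt_of_aligned hs, div_mul_cancel₀ _ hc]
    by_cases hup : ∀ j, s j = (0, 0)
    · obtain rfl : s = fun _ => (0, 0) := funext hup
      rw [vUp, if_pos hup]
      ring
    · push Not at hup
      obtain ⟨j₀, hj₀⟩ := hup
      have hdown : s j₀ = (1, 1) := (rung_eq_of_aligned (hs j₀)).resolve_left hj₀
      rw [vUp_eq_zero_of_ne hj₀, apply_eq_apply_const_down hj hψ hs hdown]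
      ring
  · push Not at hs
    obtain ⟨j, hj⟩ := hs
    rw [hal s ⟨j, hj⟩, vUp_eq_zero_of_misaligned hj, vRt_eq_zero_of_misaligned hj]
    ring

/-- The common kernel of the projectors `|↓̃,←̃⟩⟨↓̃,←̃|_{j,j+1}` and
`|←̃,↓̃⟩⟨←̃,↓̃|_{j,j+1}` over all adjacent pairs, together with the rung-alignment
constraint, is exactly 2-dimensional: it is spanned by `|↑̃⟩^{⊗L}` and `|→̃⟩^{⊗L}`. -/
theorem isolated_qmbs_kernel (L : ℕ) [NeZero L] (hL : 2 ≤ L) :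
    (∀ ψ : Conf L → ℂ,
        ((∀ s, (∃ j, (s j).1 ≠ (s j).2) → ψ s = 0) ∧
          (∀ j, (pairProj j dnT ltT).mulVec ψ = 0) ∧
          (∀ j, (pairProj j ltT dnT).mulVec ψ = 0))
          ↔ ψ ∈ Submodule.span ℂ {vUp L, vRt L}) ∧
    LinearIndependent ℂ ![vUp L, vRt L] := by
  have hj : ∀ j : Fin L, j + 1 ≠ j := by
    obtain ⟨m, rfl⟩ : ∃ m, L = m + 2 := ⟨L - 2, by omega⟩
    simp
  refine ⟨fun ψ => ⟨fun ⟨hal, hψ, _⟩ => ?_, fun hψ => ?_⟩, linearIndependent_vUp_vRt⟩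
  · exact Submodule.mem_span_pair.mpr ⟨_, _, (eq_smul_vUp_add_smul_vRt hj hal hψ).symm⟩
  · obtain ⟨a, b, rfl⟩ := Submodule.mem_span_pair.mp hψ
    refine ⟨fun s ⟨j, hs⟩ => ?_, fun j => ?_, fun j => ?_⟩
    · simp [vUp_eq_zero_of_misaligned hs, vRt_eq_zero_of_misaligned hs]
    · simp [mulVec_add, mulVec_smul, pairProj_dnT_ltT_mulVec_vUp (hj j),
        pairProj_dnT_ltT_mulVec_vRt (hj j)]
    · simp [mulVec_add, mulVec_smul, pairProj_ltT_dnT_mulVec_vUp (hj j),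
        pairProj_ltT_dnT_mulVec_vRt (hj j)]

end

end IsolatedQMBS
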